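/- Fix integers n, k, r with 2 ≤ r ≤ k−1 and n ≥ 2k+2, and define f(t) = C(2k+1−t, r) + (n−2k−1+t)·t for 0 ≤ t ≤ k. Then for every t with 1 ≤ t ≤ k−1, f(t) ≤ max{f(0), f(k)}. -/

import Mathlib

/-! A smallest maximiser `m` of a discretely convex `g` on `{0, …, k}` cannot be interior:
there `g (m - 1) < g m` and `g (m + 1) ≤ g m` would contradict `2 g m ≤ g (m - 1) + g (m + 1)`.
The function `f` is convex in `t`, being a binomial coefficient `C(2k+1-t, r)` (convex in the
upper index by Pascal's rule) plus a quadratic with positive leading coefficient. -/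

section DiscreteConvex

variable {α : Type*} [AddCommMonoid α] [LinearOrder α] [IsOrderedCancelAddMonoid α]

theorem le_max_of_discrete_convex {g : ℕ → α} {k : ℕ}
    (hg : ∀ s, s + 2 ≤ k → 2 • g (s + 1) ≤ g s + g (s + 2)) {t : ℕ} (ht : t ≤ k) :
    g t ≤ max (g 0) (g k) := by
  classical
  have hmax : ∃ m, m ≤ k ∧ ∀ u ≤ k, g u ≤ g m := by
    obtain ⟨m, hm, hle⟩ := (Finset.range (k + 1)).exists_max_image g ⟨0, by simp⟩
    exact ⟨m, Nat.lt_succ_iff.mp (Finset.mem_range.mp hm),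
      fun u hu => hle u (Finset.mem_range.mpr (Nat.lt_succ_of_le hu))⟩
  obtain ⟨hmk, hm⟩ := Nat.find_spec hmax
  rcases Nat.eq_zero_or_pos (Nat.find hmax) with h0 | hpos
  · exact le_max_of_le_left (h0 ▸ hm t ht)
  rcases hmk.eq_or_lt with hk | hlt
  · exact le_max_of_le_right (hk ▸ hm t ht)
  obtain ⟨s, hs⟩ : ∃ s, Nat.find hmax = s + 1 := ⟨_, (Nat.succ_pred_eq_of_pos hpos).symm⟩
  rw [hs] at hm hlt
  have hrise : g s < g (s + 1) := by
    have hnot := Nat.find_min hmax (hs ▸ lt_add_one s)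
    push Not at hnot
    obtain ⟨u, hu, hgu⟩ := hnot (by omega)
    exact hgu.trans_le (hm u hu)
  have hconv := hg s (by omega)
  rw [two_nsmul] at hconv
  exact absurd (hconv.trans_lt (add_lt_add_of_lt_of_le hrise (hm (s + 2) (by omega))))
    (lt_irrefl _)

end DiscreteConvex

theorem Nat.two_mul_choose_succ_le (m r : ℕ) :
    2 * (m + 1).choose r ≤ m.choose r + (m + 2).choose r := by
  cases r with
  | zero => simp
  | succ r =>
    have hpascal₁ : (m + 2).choose (r + 1) = (m + 1).choose r + (m + 1).choose (r + 1) :=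
      Nat.choose_succ_succ _ _
    have hpascal₀ : (m + 1).choose (r + 1) = m.choose r + m.choose (r + 1) :=
      Nat.choose_succ_succ _ _
    have hmono : m.choose r ≤ (m + 1).choose r := Nat.choose_le_choose r m.le_succ
    omega

/-- The paper's `f_r(n, k, t)`. -/
def matchingBound (n k r t : ℕ) : ℕ :=
  (2 * k + 1 - t).choose r + (n - (2 * k + 1) + t) * t

theorem matchingBound_convex (n k r s : ℕ) (hs : s + 2 ≤ 2 * k + 1) :
    2 • matchingBound n k r (s + 1) ≤ matchingBound n k r s + matchingBound n k r (s + 2) := by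
  obtain ⟨m, hm⟩ : ∃ m, 2 * k + 1 - s = m + 2 := ⟨2 * k + 1 - s - 2, by omega⟩
  have hchoose := Nat.two_mul_choose_succ_le m r
  have hquad : (n - (2 * k + 1) + s) * s + (n - (2 * k + 1) + (s + 2)) * (s + 2) =
      2 * ((n - (2 * k + 1) + (s + 1)) * (s + 1)) + 2 := by ring
  simp only [matchingBound, smul_eq_mul, hm, show 2 * k + 1 - (s + 1) = m + 1 by omega,
    show 2 * k + 1 - (s + 2) = m by omega]
  omega

theorem stmt6_general (n k r : ℕ) (t : ℕ) (htk : t ≤ k - 1) :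
    (2 * k + 1 - t).choose r + (n - (2 * k + 1) + t) * t ≤
      max ((2 * k + 1).choose r + (n - (2 * k + 1)) * 0)
          ((k + 1).choose r + (n - (2 * k + 1) + k) * k) := by
  have hbound := le_max_of_discrete_convex (g := matchingBound n k r)
    (fun s hs => matchingBound_convex n k r s (by omega)) (show t ≤ k by omega)
  simpa [matchingBound, show 2 * k + 1 - k = k + 1 by omega] using hbound

theorem stmt6 (n k r : ℕ) (hr2 : 2 ≤ r) (hrk : r ≤ k - 1) (hn : 2 * k + 2 ≤ n)
    (t : ℕ) (ht1 : 1 ≤ t) (htk : t ≤ k - 1) :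
    (2 * k + 1 - t).choose r + (n - (2 * k + 1) + t) * t ≤
      max ((2 * k + 1).choose r + (n - (2 * k + 1)) * 0)
          ((k + 1).choose r + (n - (2 * k + 1) + k) * k) :=
  stmt6_general n k r t htk
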